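/- With the same setup, the labeling-difference term can be taken under either distribution: ε^t(h) ≤ ε^s(h) + 2·d_1(P^s, P^t) + min{ E_{x∼P^s}[|h*^s(x) − h*^t(x)|], E_{x∼P^t}[|h*^s(x) − h*^t(x)|] }. -/

import Mathlib

open MeasureTheory

/-- Total variation distance: sup over measurable sets of |P(A) − Q(A)|. -/
noncomputable def tv {X : Type*} [MeasurableSpace X] (P Q : Measure X) : ℝ :=
  ⨆ A : {A : Set X // MeasurableSet A}, |(P A.1).toReal - (Q A.1).toReal|

lemma prob_toReal_le_one {X : Type*} [MeasurableSpace X] (P : Measure X)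
    [IsProbabilityMeasure P] (A : Set X) : (P A).toReal ≤ 1 := by
  have h : P A ≤ 1 := prob_le_one
  calc (P A).toReal ≤ (1 : ENNReal).toReal := ENNReal.toReal_mono (by simp) h
    _ = 1 := by simp

lemma tv_bdd {X : Type*} [MeasurableSpace X] (P Q : Measure X)
    [IsProbabilityMeasure P] [IsProbabilityMeasure Q] :
    BddAbove (Set.range fun A : {A : Set X // MeasurableSet A} =>
      |(P A.1).toReal - (Q A.1).toReal|) := by
  refine ⟨1, ?_⟩
  rintro _ ⟨A, rfl⟩
  have h1 := prob_toReal_le_one P A.1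
  have h2 := prob_toReal_le_one Q A.1
  have h3 : (0:ℝ) ≤ (P A.1).toReal := ENNReal.toReal_nonneg
  have h4 : (0:ℝ) ≤ (Q A.1).toReal := ENNReal.toReal_nonneg
  rw [abs_sub_le_iff]
  constructor <;> linarith

lemma le_tv {X : Type*} [MeasurableSpace X] (P Q : Measure X)
    [IsProbabilityMeasure P] [IsProbabilityMeasure Q] {A : Set X} (hA : MeasurableSet A) :
    (P A).toReal - (Q A).toReal ≤ tv P Q :=
  le_trans (le_abs_self _) (le_ciSup (tv_bdd P Q) ⟨A, hA⟩)

lemma tv_nonneg {X : Type*} [MeasurableSpace X] (P Q : Measure X)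
    [IsProbabilityMeasure P] [IsProbabilityMeasure Q] : 0 ≤ tv P Q := by
  have := le_trans (le_abs_self _) (le_ciSup (tv_bdd P Q) ⟨∅, MeasurableSet.empty⟩)
  simpa [tv] using this

lemma tv_symm {X : Type*} [MeasurableSpace X] (P Q : Measure X) : tv P Q = tv Q P := by
  unfold tv
  congr 1
  funext A
  exact abs_sub_comm _ _

lemma integrable_of_bdd {X : Type*} [MeasurableSpace X] (P : Measure X)
    [IsProbabilityMeasure P] (f : X → ℝ) (mf : Measurable f)
    (bf : ∀ x, f x ∈ Set.Icc (0:ℝ) 1) : Integrable f P := by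
  refine (integrable_const (1:ℝ)).mono' mf.aestronglyMeasurable ?_
  filter_upwards with x
  rw [Real.norm_eq_abs, abs_le]
  exact ⟨by linarith [(bf x).1], (bf x).2⟩

lemma integral_le_integral_add_tv {X : Type*} [MeasurableSpace X] (P Q : Measure X)
    [IsProbabilityMeasure P] [IsProbabilityMeasure Q] (f : X → ℝ)
    (mf : Measurable f) (bf : ∀ x, f x ∈ Set.Icc (0:ℝ) 1) :
    ∫ x, f x ∂P ≤ (∫ x, f x ∂Q) + tv P Q := by
  obtain ⟨s, hs, hge, hle⟩ := hahn_decomposition (μ := P) (ν := Q)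
  have intP : Integrable f P := integrable_of_bdd P f mf bf
  have intQ : Integrable f Q := integrable_of_bdd Q f mf bf
  have fnn : ∀ x, 0 ≤ f x := fun x => (bf x).1
  -- restrict inequalities
  have hres1 : P.restrict sᶜ ≤ Q.restrict sᶜ := by
    refine Measure.le_iff.2 fun t ht => ?_
    rw [Measure.restrict_apply ht, Measure.restrict_apply ht]
    exact hle _ (ht.inter hs.compl) Set.inter_subset_right
  have hres2 : Q.restrict s ≤ P.restrict s := by
    refine Measure.le_iff.2 fun t ht => ?_
    rw [Measure.restrict_apply ht, Measure.restrict_apply ht]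
    exact hge _ (ht.inter hs) Set.inter_subset_right
  have h1 : ∫ x in sᶜ, f x ∂P ≤ ∫ x in sᶜ, f x ∂Q :=
    integral_mono_measure hres1 (Filter.Eventually.of_forall fnn) intQ.restrict
  -- on s: use 1 - f
  have h2 : ∫ x in s, (1 - f x) ∂Q ≤ ∫ x in s, (1 - f x) ∂P := by
    refine integral_mono_measure hres2 (Filter.Eventually.of_forall fun x => ?_) ?_
    · simp [(bf x).2]
    · exact ((integrable_const (1:ℝ)).sub intP).restrict
  have e1 : ∫ x in s, (1 - f x) ∂Q = (Q s).toReal - ∫ x in s, f x ∂Q := by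
    rw [integral_sub (integrable_const 1) intQ.restrict]
    simp [Measure.restrict_apply_univ, Measure.real]
  have e2 : ∫ x in s, (1 - f x) ∂P = (P s).toReal - ∫ x in s, f x ∂P := by
    rw [integral_sub (integrable_const 1) intP.restrict]
    simp [Measure.restrict_apply_univ, Measure.real]
  have h3 : ∫ x in s, f x ∂P ≤ ∫ x in s, f x ∂Q + ((P s).toReal - (Q s).toReal) := by
    rw [e1, e2] at h2; linarith
  have htv : (P s).toReal - (Q s).toReal ≤ tv P Q := le_tv P Q hs
  have split1 := integral_add_compl hs intP
  have split2 := integral_add_compl hs intQ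
  linarith

/-- The labeling-difference term can be taken under either distribution. -/
theorem da_bound_tv_min {X : Type*} [MeasurableSpace X]
    (Ps Pt : Measure X) [IsProbabilityMeasure Ps] [IsProbabilityMeasure Pt]
    (h hs ht : X → ℝ) (mh : Measurable h) (mhs : Measurable hs) (mht : Measurable ht)
    (bh : ∀ x, h x ∈ Set.Icc (0:ℝ) 1) (bhs : ∀ x, hs x ∈ Set.Icc (0:ℝ) 1)
    (bht : ∀ x, ht x ∈ Set.Icc (0:ℝ) 1) :
    ∫ x, |h x - ht x| ∂Pt ≤
      (∫ x, |h x - hs x| ∂Ps) + 2 * tv Ps Pt +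
        min (∫ x, |hs x - ht x| ∂Ps) (∫ x, |hs x - ht x| ∂Pt) := by
  have babs : ∀ (f g : X → ℝ), (∀ x, f x ∈ Set.Icc (0:ℝ) 1) → (∀ x, g x ∈ Set.Icc (0:ℝ) 1) →
      ∀ x, |f x - g x| ∈ Set.Icc (0:ℝ) 1 := by
    intro f g bf bg x
    have := (bf x).1; have := (bf x).2; have := (bg x).1; have := (bg x).2
    constructor
    · exact abs_nonneg _
    · rw [abs_le]; constructor <;> linarith
  have m1 : Measurable fun x => |h x - ht x| := (mh.sub mht).abs
  have m2 : Measurable fun x => |h x - hs x| := (mh.sub mhs).abs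
  have m3 : Measurable fun x => |hs x - ht x| := (mhs.sub mht).abs
  have b1 := babs h ht bh bht
  have b2 := babs h hs bh bhs
  have b3 := babs hs ht bhs bht
  have tvs : tv Pt Ps = tv Ps Pt := tv_symm Pt Ps
  -- triangle inequality under Pt
  have tri : ∫ x, |h x - ht x| ∂Pt ≤ (∫ x, |h x - hs x| ∂Pt) + ∫ x, |hs x - ht x| ∂Pt := by
    rw [← integral_add (integrable_of_bdd Pt _ m2 b2) (integrable_of_bdd Pt _ m3 b3)]
    refine integral_mono (integrable_of_bdd Pt _ m1 b1)
      ((integrable_of_bdd Pt _ m2 b2).add (integrable_of_bdd Pt _ m3 b3)) fun x => ?_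
    calc |h x - ht x| = |(h x - hs x) + (hs x - ht x)| := by ring_nf
      _ ≤ |h x - hs x| + |hs x - ht x| := abs_add_le _ _
  have step1 : ∫ x, |h x - hs x| ∂Pt ≤ (∫ x, |h x - hs x| ∂Ps) + tv Ps Pt := by
    have := integral_le_integral_add_tv Pt Ps _ m2 b2
    rwa [tvs] at this
  have step2 : ∫ x, |hs x - ht x| ∂Pt ≤
      min (∫ x, |hs x - ht x| ∂Ps) (∫ x, |hs x - ht x| ∂Pt) + tv Ps Pt := by
    rcases le_total (∫ x, |hs x - ht x| ∂Ps) (∫ x, |hs x - ht x| ∂Pt) with hc | hc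
    · rw [min_eq_left hc]
      have := integral_le_integral_add_tv Pt Ps _ m3 b3
      rwa [tvs] at this
    · rw [min_eq_right hc]
      linarith [tv_nonneg Ps Pt]
  linarith
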